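/- arXiv:2512.04684 — 5 statements merged into one kernel-verified Lean document; each statement's English description precedes it below -/
import Mathlib

section
/- Let d ≥ 2 and let Ω = Σᵢ cᵢ eᵢ* be a linear form on ℝ^d with c₁ < 0 and cᵢ ≥ 0 for i ≥ 2, and suppose c := Σᵢ cᵢ > 0. Then for any σ₁,…,σ_d ∈ (0,1), either Σᵢ cᵢ(−log σᵢ) ≥ c·(−log σ₁) or Σᵢ cᵢ(−log(1−σᵢ)) ≥ c·(−log(1−σ₁)). -/
open Real Finset

/-- Jensen-type helper: weighted sum of logs bounded by total weight times log of a
dominating point. -/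
lemma weighted_log_le {d : ℕ} (t : Finset (Fin d)) (c x : Fin d → ℝ)
    (hc : ∀ i ∈ t, 0 ≤ c i) (hC : 0 < ∑ i ∈ t, c i)
    (hx : ∀ i ∈ t, 0 < x i) (τ : ℝ) (hτ : 0 < τ)
    (hle : ∑ i ∈ t, c i * x i ≤ (∑ i ∈ t, c i) * τ) :
    ∑ i ∈ t, c i * Real.log (x i) ≤ (∑ i ∈ t, c i) * Real.log τ := by
  set C := ∑ i ∈ t, c i with hCdef
  have hw0 : ∀ i ∈ t, 0 ≤ c i / C := fun i hi => div_nonneg (hc i hi) hC.le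
  have hw1 : ∑ i ∈ t, c i / C = 1 := by
    rw [← Finset.sum_div]; exact div_self hC.ne'
  have hconc : ConcaveOn ℝ (Set.Ioi 0) Real.log :=
    StrictConcaveOn.concaveOn strictConcaveOn_log_Ioi
  have hjen := hconc.le_map_sum hw0 hw1 (p := x) (fun i hi => hx i hi)
  simp only [smul_eq_mul] at hjen
  set m := ∑ i ∈ t, c i / C * x i with hm
  have hm0 : 0 < m := by
    obtain ⟨j, hj, hcj⟩ : ∃ j ∈ t, 0 < c j := by
      by_contra h
      push_neg at h
      have : C ≤ 0 := Finset.sum_nonpos (fun i hi => (h i hi))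
      linarith
    refine Finset.sum_pos' (fun i hi => mul_nonneg (hw0 i hi) (hx i hi).le) ⟨j, hj, ?_⟩
    exact mul_pos (div_pos hcj hC) (hx j hj)
  have hmτ : m ≤ τ := by
    have hme : m = (∑ i ∈ t, c i * x i) / C := by
      rw [hm, Finset.sum_div]; exact Finset.sum_congr rfl (fun i _ => by ring)
    rw [hme, div_le_iff₀ hC]
    linarith [hle]
  have hlog : Real.log m ≤ Real.log τ := Real.log_le_log hm0 hmτ
  have h2 : ∑ i ∈ t, c i / C * Real.log (x i) ≤ Real.log τ := le_trans hjen hlog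
  have h3 : C * ∑ i ∈ t, c i / C * Real.log (x i) ≤ C * Real.log τ :=
    mul_le_mul_of_nonneg_left h2 hC.le
  calc ∑ i ∈ t, c i * Real.log (x i)
      = C * ∑ i ∈ t, c i / C * Real.log (x i) := by
        rw [Finset.mul_sum]
        exact Finset.sum_congr rfl (fun i _ => by field_simp)
    _ ≤ C * Real.log τ := h3

open Real in
/-- Lemma 3.2: key convexity estimate for azimuthal linear forms.
If `c 0 < 0`, other coefficients nonnegative, and the total sum is positive,
then for any `σ i ∈ (0,1)`, one of the two weighted-log inequalities holds. -/
theorem azimuthal_log_estimate {d : ℕ} (hd : 2 ≤ d) (c : Fin d → ℝ)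
    (h1 : c ⟨0, by omega⟩ < 0)
    (hi : ∀ i : Fin d, i ≠ ⟨0, by omega⟩ → 0 ≤ c i)
    (hc : 0 < ∑ i, c i)
    (σ : Fin d → ℝ) (hσ : ∀ i, σ i ∈ Set.Ioo (0 : ℝ) 1) :
    (∑ i, c i) * (-Real.log (σ ⟨0, by omega⟩)) ≤ ∑ i, c i * (-Real.log (σ i)) ∨
    (∑ i, c i) * (-Real.log (1 - σ ⟨0, by omega⟩)) ≤ ∑ i, c i * (-Real.log (1 - σ i)) := by
  set i0 : Fin d := ⟨0, by omega⟩ with hi0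
  set t := Finset.univ.erase i0 with ht
  have hsplit : ∀ f : Fin d → ℝ, ∑ i, f i = f i0 + ∑ i ∈ t, f i := by
    intro f
    rw [ht, Finset.add_sum_erase _ f (Finset.mem_univ i0)]
  have hC : 0 < ∑ i ∈ t, c i := by
    have := hsplit c
    linarith [hc, h1, this]
  have hcnn : ∀ i ∈ t, 0 ≤ c i := fun i hit => hi i (Finset.ne_of_mem_erase hit)
  have hσ0m := hσ i0
  by_cases hcase : ∑ i ∈ t, c i * σ i ≤ (∑ i ∈ t, c i) * σ i0
  · left
    have key := weighted_log_le t c σ hcnn hC (fun i _ => (hσ i).1) (σ i0) hσ0m.1 hcase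
    have e1 : ∑ i, c i * (-Real.log (σ i))
        = c i0 * (-Real.log (σ i0)) + ∑ i ∈ t, c i * (-Real.log (σ i)) :=
      hsplit (fun i => c i * (-Real.log (σ i)))
    have e2 : ∑ i ∈ t, c i * (-Real.log (σ i)) = -∑ i ∈ t, c i * Real.log (σ i) := by
      rw [← Finset.sum_neg_distrib]
      exact Finset.sum_congr rfl (fun i _ => by ring)
    rw [e1, e2, hsplit c]
    nlinarith [key]
  · right
    push_neg at hcase
    have key := weighted_log_le t c (fun i => 1 - σ i) hcnn hC
      (fun i _ => show (0:ℝ) < 1 - σ i from sub_pos.mpr (hσ i).2)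
      (1 - σ i0) (sub_pos.mpr hσ0m.2) ?_
    · have e1 : ∑ i, c i * (-Real.log (1 - σ i))
          = c i0 * (-Real.log (1 - σ i0)) + ∑ i ∈ t, c i * (-Real.log (1 - σ i)) :=
        hsplit (fun i => c i * (-Real.log (1 - σ i)))
      have e2 : ∑ i ∈ t, c i * (-Real.log (1 - σ i))
          = -∑ i ∈ t, c i * Real.log (1 - σ i) := by
        rw [← Finset.sum_neg_distrib]
        exact Finset.sum_congr rfl (fun i _ => by ring)
      rw [e1, e2, hsplit c]
      have key' : ∑ i ∈ t, c i * Real.log (1 - σ i)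
          ≤ (∑ i ∈ t, c i) * Real.log (1 - σ i0) := key
      nlinarith [key']
    · have e3 : ∑ i ∈ t, c i * (1 - σ i) = (∑ i ∈ t, c i) - ∑ i ∈ t, c i * σ i := by
        rw [← Finset.sum_sub_distrib]
        exact Finset.sum_congr rfl (fun i _ => by ring)
      show ∑ i ∈ t, c i * (1 - σ i) ≤ (∑ i ∈ t, c i) * (1 - σ i0)
      rw [e3]
      nlinarith [hcase]
end

section
/- Let A, B, C, T be real numbers with T = A² + B² + C² − ABC − 2, and write A = 2cosh a, B = 2cosh b, C = 2cosh c with a, b, c > 0. Then 2 − T = (e^{a+b} − e^c)(e^{b+c} − e^a)(e^{c+a} − e^b)(e^{a+b+c} − 1) / e^{2(a+b+c)}. -/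
/-- Equation (12): rewriting of the Markoff trace identity
`T = A² + B² + C² − ABC − 2` with `A = 2cosh a`, `B = 2cosh b`, `C = 2cosh c`. -/
theorem markoff_identity_rewrite (a b c A B C T : ℝ)
    (ha : 0 < a) (hb : 0 < b) (hc : 0 < c)
    (hA : A = 2 * Real.cosh a) (hB : B = 2 * Real.cosh b) (hC : C = 2 * Real.cosh c)
    (hT : T = A ^ 2 + B ^ 2 + C ^ 2 - A * B * C - 2) :
    2 - T = (Real.exp (a + b) - Real.exp c) * (Real.exp (b + c) - Real.exp a) *
        (Real.exp (c + a) - Real.exp b) * (Real.exp (a + b + c) - 1) /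
        Real.exp (2 * (a + b + c)) := by
  have hxa := Real.exp_ne_zero a
  have hxb := Real.exp_ne_zero b
  have hxc := Real.exp_ne_zero c
  subst hA hB hC hT
  have h2 : Real.exp (2 * (a + b + c)) = (Real.exp a * Real.exp b * Real.exp c) ^ 2 := by
    rw [← Real.exp_add, ← Real.exp_add, ← Real.exp_nat_mul]; ring_nf
  rw [h2]
  simp only [Real.cosh_eq, Real.exp_add, Real.exp_neg, two_mul, mul_comm]
  field_simp
  ring
end

section
/- Let a, b, c > 0 and ε ∈ (0,1) satisfy e^a ≤ ε·e^{b+c}, e^b ≤ ε·e^{c+a}, e^c ≤ ε·e^{a+b}, and 1 ≤ ε·e^{a+b+c}. Then, setting T := (2cosh a)² + (2cosh b)² + (2cosh c)² − (2cosh a)(2cosh b)(2cosh c) − 2, one has (1−ε)⁴ · e^{a+b+c} ≤ 2 − T ≤ e^{a+b+c}. -/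
set_option maxHeartbeats 1000000 in
/-- Estimate (13): for a thin hyperbolic triangle with large side lengths `a, b, c`
(quantified by the exponential inequalities), the commutator trace `T` of the Markoff
identity satisfies `(1-ε)⁴ e^{a+b+c} ≤ 2 - T ≤ e^{a+b+c}`. -/
theorem thin_triangle_trace_estimate (a b c ε : ℝ)
    (ha : 0 < a) (hb : 0 < b) (hc : 0 < c) (hε : ε ∈ Set.Ioo (0 : ℝ) 1)
    (h1 : Real.exp a ≤ ε * Real.exp (b + c))
    (h2 : Real.exp b ≤ ε * Real.exp (c + a))
    (h3 : Real.exp c ≤ ε * Real.exp (a + b))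
    (h4 : 1 ≤ ε * Real.exp (a + b + c)) :
    (1 - ε) ^ 4 * Real.exp (a + b + c) ≤
      2 - ((2 * Real.cosh a) ^ 2 + (2 * Real.cosh b) ^ 2 + (2 * Real.cosh c) ^ 2
        - (2 * Real.cosh a) * (2 * Real.cosh b) * (2 * Real.cosh c) - 2) ∧
    2 - ((2 * Real.cosh a) ^ 2 + (2 * Real.cosh b) ^ 2 + (2 * Real.cosh c) ^ 2
        - (2 * Real.cosh a) * (2 * Real.cosh b) * (2 * Real.cosh c) - 2) ≤
      Real.exp (a + b + c) := by
  obtain ⟨hε0, hε1⟩ := hε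
  set A := Real.exp a with hAdef
  set B := Real.exp b with hBdef
  set C := Real.exp c with hCdef
  have hA : 0 < A := Real.exp_pos a
  have hB : 0 < B := Real.exp_pos b
  have hC : 0 < C := Real.exp_pos c
  have hBC : Real.exp (b + c) = B * C := Real.exp_add b c
  have hCA : Real.exp (c + a) = C * A := Real.exp_add c a
  have hAB : Real.exp (a + b) = A * B := Real.exp_add a b
  have hABC : Real.exp (a + b + c) = A * B * C := by
    rw [Real.exp_add, Real.exp_add]
  rw [hBC] at h1; rw [hCA] at h2; rw [hAB] at h3; rw [hABC] at h4
  have hcosha : Real.cosh a = (A + A⁻¹) / 2 := by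
    rw [Real.cosh_eq, Real.exp_neg]
  have hcoshb : Real.cosh b = (B + B⁻¹) / 2 := by
    rw [Real.cosh_eq, Real.exp_neg]
  have hcoshc : Real.cosh c = (C + C⁻¹) / 2 := by
    rw [Real.cosh_eq, Real.exp_neg]
  rw [hABC, hcosha, hcoshb, hcoshc]
  have key : 2 - ((2 * ((A + A⁻¹) / 2)) ^ 2 + (2 * ((B + B⁻¹) / 2)) ^ 2
      + (2 * ((C + C⁻¹) / 2)) ^ 2
      - (2 * ((A + A⁻¹) / 2)) * (2 * ((B + B⁻¹) / 2)) * (2 * ((C + C⁻¹) / 2)) - 2)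
      = (A * B - C) * (B * C - A) * (C * A - B) * (A * B * C - 1) / (A * B * C) ^ 2 := by
    field_simp
    ring
  rw [key]
  have e1l : (1 - ε) * (A * B) ≤ A * B - C := by nlinarith
  have e2l : (1 - ε) * (B * C) ≤ B * C - A := by nlinarith
  have e3l : (1 - ε) * (C * A) ≤ C * A - B := by nlinarith
  have e4l : (1 - ε) * (A * B * C) ≤ A * B * C - 1 := by nlinarith
  have hε' : (0:ℝ) < 1 - ε := by linarith
  have p1 : 0 < A * B - C := lt_of_lt_of_le (by positivity) e1l
  have p2 : 0 < B * C - A := lt_of_lt_of_le (by positivity) e2l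
  have p3 : 0 < C * A - B := lt_of_lt_of_le (by positivity) e3l
  have p4 : 0 < A * B * C - 1 := lt_of_lt_of_le (by positivity) e4l
  have e1u : A * B - C ≤ A * B := by linarith
  have e2u : B * C - A ≤ B * C := by linarith
  have e3u : C * A - B ≤ C * A := by linarith
  have e4u : A * B * C - 1 ≤ A * B * C := by linarith
  constructor
  · have hprod : ((1 - ε) * (A * B)) * ((1 - ε) * (B * C)) * ((1 - ε) * (C * A))
        * ((1 - ε) * (A * B * C))
        ≤ (A * B - C) * (B * C - A) * (C * A - B) * (A * B * C - 1) := by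
      gcongr <;> positivity
    rw [le_div_iff₀ (by positivity)]
    calc (1 - ε) ^ 4 * (A * B * C) * (A * B * C) ^ 2
        = ((1 - ε) * (A * B)) * ((1 - ε) * (B * C)) * ((1 - ε) * (C * A))
          * ((1 - ε) * (A * B * C)) := by ring
      _ ≤ _ := hprod
  · rw [div_le_iff₀ (by positivity)]
    calc (A * B - C) * (B * C - A) * (C * A - B) * (A * B * C - 1)
        ≤ (A * B) * (B * C) * (C * A) * (A * B * C) := by gcongr <;> positivity
      _ = A * B * C * (A * B * C) ^ 2 := by ring
end

section
/- Let ε ∈ (0,1) and a, b, c > 0 satisfy (1−ε)·e^{a+b} ≤ e^c ≤ e^{a+b}, e^b ≤ ε·e^{a+c}, e^a ≤ ε·e^{b+c}, and 1 ≤ ε·e^{a+b+c}. Set T := (2cosh a)² + (2cosh b)² + (2cosh c)² − (2cosh a)(2cosh b)(2cosh c) − 2. Then (2−T)·e^{−2c} ≤ e^{a+b−c} − 1 ≤ (1−ε)^{−3}·(2−T)·e^{−2c}. -/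
lemma mutation_slack_aux (x y z ε : ℝ) (hx : 0 < x) (hy : 0 < y) (hz : 0 < z)
    (hε0 : 0 < ε) (hε1 : ε < 1)
    (h2 : z ≤ x * y) (h3 : y ≤ ε * (x * z)) (h4 : x ≤ ε * (y * z))
    (h5 : 1 ≤ ε * (x * y * z)) :
    (2 - ((x + x⁻¹) ^ 2 + (y + y⁻¹) ^ 2 + (z + z⁻¹) ^ 2
        - (x + x⁻¹) * (y + y⁻¹) * (z + z⁻¹) - 2)) * (z ^ 2)⁻¹ ≤ x * y / z - 1 ∧
    x * y / z - 1 ≤ (1 - ε)⁻¹ ^ 3 *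
      (2 - ((x + x⁻¹) ^ 2 + (y + y⁻¹) ^ 2 + (z + z⁻¹) ^ 2
        - (x + x⁻¹) * (y + y⁻¹) * (z + z⁻¹) - 2)) * (z ^ 2)⁻¹ := by
  have hδ : 0 < 1 - ε := by linarith
  have hs : 0 ≤ x * y - z := by linarith
  have ht : (1 - ε) * (y * z) ≤ y * z - x := by nlinarith
  have hu : (1 - ε) * (x * z) ≤ z * x - y := by nlinarith
  have hv : (1 - ε) * (x * y * z) ≤ x * y * z - 1 := by nlinarith
  have ht0 : 0 ≤ y * z - x := le_trans (by positivity) ht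
  have hu0 : 0 ≤ z * x - y := le_trans (by positivity) hu
  have hv0 : 0 ≤ x * y * z - 1 := le_trans (by positivity) hv
  have hT : 2 - ((x + x⁻¹) ^ 2 + (y + y⁻¹) ^ 2 + (z + z⁻¹) ^ 2
        - (x + x⁻¹) * (y + y⁻¹) * (z + z⁻¹) - 2)
      = (x * y - z) * ((y * z - x) * ((z * x - y) * (x * y * z - 1))) / (x * y * z) ^ 2 := by
    field_simp
    ring
  have hrhs : x * y / z - 1 = (x * y - z) / z := by field_simp
  rw [hT, hrhs]
  constructor
  · rw [show (x * y - z) * ((y * z - x) * ((z * x - y) * (x * y * z - 1))) / (x * y * z) ^ 2 *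
        (z ^ 2)⁻¹
        = (x * y - z) * ((y * z - x) * ((z * x - y) * (x * y * z - 1))) / ((x * y * z) ^ 2 * z ^ 2)
        from by ring, div_le_div_iff₀ (by positivity) hz]
    have c1 : (y * z - x) * ((z * x - y) * (x * y * z - 1))
        ≤ (y * z) * ((z * x) * (x * y * z)) := by
      apply mul_le_mul (by linarith) _ (by positivity) (by positivity)
      apply mul_le_mul (by linarith) (by linarith) hv0 (by positivity)
    calc (x * y - z) * ((y * z - x) * ((z * x - y) * (x * y * z - 1))) * z
        ≤ (x * y - z) * ((y * z) * ((z * x) * (x * y * z))) * z :=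
          mul_le_mul_of_nonneg_right (mul_le_mul_of_nonneg_left c1 hs) hz.le
      _ = (x * y - z) * ((x * y * z) ^ 2 * z ^ 2) := by ring
  · rw [show (1 - ε)⁻¹ ^ 3 * ((x * y - z) * ((y * z - x) * ((z * x - y) * (x * y * z - 1))) /
        (x * y * z) ^ 2) * (z ^ 2)⁻¹
        = (1 - ε)⁻¹ ^ 3 * ((x * y - z) * ((y * z - x) * ((z * x - y) * (x * y * z - 1)))) /
          ((x * y * z) ^ 2 * z ^ 2) from by ring,
      div_le_div_iff₀ hz (by positivity)]
    have c2 : ((1 - ε) * (y * z)) * (((1 - ε) * (x * z)) * ((1 - ε) * (x * y * z)))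
        ≤ (y * z - x) * ((z * x - y) * (x * y * z - 1)) := by
      apply mul_le_mul ht _ (by positivity) ht0
      apply mul_le_mul hu hv (by positivity) hu0
    calc (x * y - z) * ((x * y * z) ^ 2 * z ^ 2)
        = (1 - ε)⁻¹ ^ 3 * ((x * y - z) *
            (((1 - ε) * (y * z)) * (((1 - ε) * (x * z)) * ((1 - ε) * (x * y * z))))) * z := by
          field_simp
      _ ≤ (1 - ε)⁻¹ ^ 3 * ((x * y - z) *
            ((y * z - x) * ((z * x - y) * (x * y * z - 1)))) * z :=
          mul_le_mul_of_nonneg_right (mul_le_mul_of_nonneg_left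
            (mul_le_mul_of_nonneg_left c2 hs) (by positivity)) hz.le

/-- Section 5.2.1: the slack estimate `(2-T) e^{-2c} ≤ e^{a+b-c} - 1 ≤ (1-ε)⁻³ (2-T) e^{-2c}`
for thin hyperbolic triangles obtained by mutations. -/
theorem mutation_slack_estimate (a b c ε : ℝ)
    (ha : 0 < a) (hb : 0 < b) (hc : 0 < c) (hε : ε ∈ Set.Ioo (0 : ℝ) 1)
    (h1 : (1 - ε) * Real.exp (a + b) ≤ Real.exp c)
    (h2 : Real.exp c ≤ Real.exp (a + b))
    (h3 : Real.exp b ≤ ε * Real.exp (a + c))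
    (h4 : Real.exp a ≤ ε * Real.exp (b + c))
    (h5 : 1 ≤ ε * Real.exp (a + b + c)) :
    (2 - ((2 * Real.cosh a) ^ 2 + (2 * Real.cosh b) ^ 2 + (2 * Real.cosh c) ^ 2
        - (2 * Real.cosh a) * (2 * Real.cosh b) * (2 * Real.cosh c) - 2)) *
        Real.exp (-(2 * c)) ≤ Real.exp (a + b - c) - 1 ∧
    Real.exp (a + b - c) - 1 ≤ (1 - ε)⁻¹ ^ 3 *
      (2 - ((2 * Real.cosh a) ^ 2 + (2 * Real.cosh b) ^ 2 + (2 * Real.cosh c) ^ 2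
        - (2 * Real.cosh a) * (2 * Real.cosh b) * (2 * Real.cosh c) - 2)) *
        Real.exp (-(2 * c)) := by
  obtain ⟨hε0, hε1⟩ := hε
  have hch : ∀ t : ℝ, 2 * Real.cosh t = Real.exp t + (Real.exp t)⁻¹ := fun t => by
    rw [Real.cosh_eq, Real.exp_neg]; ring
  have h2c : Real.exp (-(2 * c)) = (Real.exp c ^ 2)⁻¹ := by
    rw [Real.exp_neg, two_mul, Real.exp_add, sq]
  have habmc : Real.exp (a + b - c) = Real.exp a * Real.exp b / Real.exp c := by
    rw [Real.exp_sub, Real.exp_add]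
  rw [hch a, hch b, hch c, h2c, habmc]
  exact mutation_slack_aux (Real.exp a) (Real.exp b) (Real.exp c) ε
    (Real.exp_pos a) (Real.exp_pos b) (Real.exp_pos c) hε0 hε1
    (by rwa [← Real.exp_add])
    (by rwa [← Real.exp_add])
    (by rwa [← Real.exp_add])
    (by rwa [Real.exp_add, Real.exp_add] at h5)
end

section
/- For L'', L''' > 0 and θ ∈ (0, π), define ℓ' ≥ 0 by cosh(ℓ'/2) = 2·cosh(L''/2)·cosh(L'''/2)·sin²(θ/2) − cosh((L''−L''')/2), assuming the right-hand side is ≥ 1. Then for every ε > 0 and θ₀ ∈ (0, π/2) there exists L₀ > 0 such that whenever θ ∈ [θ₀, π−θ₀] and L'', L''' ≥ L₀, one has |ℓ' − (L'' + L''' + 2·log sin²(θ/2))| ≤ ε. -/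
set_option maxHeartbeats 1000000


open Real in
/-- Lemma 3.3, second estimate: if `cosh(ℓ'/2) = 2 cosh(L''/2) cosh(L'''/2) sin²(θ/2)
− cosh((L''−L''')/2)` with `θ` bounded away from `0` and `π` and `L'', L'''` large, then
`ℓ' ≈ L'' + L''' + 2 log sin²(θ/2)` within `ε`. -/
theorem one_curve_resolution_length :
    ∀ ε > (0 : ℝ), ∀ θ₀ ∈ Set.Ioo (0 : ℝ) (π / 2), ∃ L₀ > (0 : ℝ),
      ∀ θ ∈ Set.Icc θ₀ (π - θ₀), ∀ L'' L''' : ℝ, L₀ ≤ L'' → L₀ ≤ L''' →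
        ∀ l' : ℝ, 0 ≤ l' →
          1 ≤ 2 * Real.cosh (L'' / 2) * Real.cosh (L''' / 2) * Real.sin (θ / 2) ^ 2
              - Real.cosh ((L'' - L''') / 2) →
          Real.cosh (l' / 2) =
            2 * Real.cosh (L'' / 2) * Real.cosh (L''' / 2) * Real.sin (θ / 2) ^ 2
              - Real.cosh ((L'' - L''') / 2) →
          |l' - (L'' + L''' + 2 * Real.log (Real.sin (θ / 2) ^ 2))| ≤ ε := by
  intro ε hε θ₀ hθ₀
  obtain ⟨hθ₀0, hθ₀π⟩ := hθ₀
  have hπ := Real.pi_pos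
  have hsθ₀ : 0 < Real.sin (θ₀ / 2) :=
    Real.sin_pos_of_pos_of_lt_pi (by linarith) (by linarith)
  set s₀ : ℝ := Real.sin (θ₀ / 2) ^ 2 with hs₀def
  have hs₀pos : 0 < s₀ := by positivity
  set δ : ℝ := min (1/2 : ℝ) (ε/4) with hδdef
  have hδpos : 0 < δ := lt_min (by norm_num) (by linarith)
  have hδhalf : δ ≤ 1/2 := min_le_left _ _
  have hδε : δ ≤ ε/4 := min_le_right _ _
  set C : ℝ := max (3/(s₀*δ)) (2/ε) with hCdef
  have hC : 0 < C := lt_of_lt_of_le (by positivity) (le_max_right _ _)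
  refine ⟨max 1 (Real.log C), lt_of_lt_of_le one_pos (le_max_left _ _), ?_⟩
  set L₀ : ℝ := max 1 (Real.log C) with hL₀def
  intro θ hθ L'' L''' hL'' hL''' l' hl' h1 heq
  clear_value s₀ δ C L₀
  have hL₀1 : (1:ℝ) ≤ L₀ := by rw [hL₀def]; exact le_max_left _ _
  have hCexp : C ≤ Real.exp L₀ := by
    calc C = Real.exp (Real.log C) := (Real.exp_log hC).symm
    _ ≤ Real.exp L₀ := Real.exp_le_exp.mpr (by rw [hL₀def]; exact le_max_right _ _)
  have hinvL : Real.exp (-L₀) * Real.exp L₀ = 1 := by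
    rw [← Real.exp_add]; simp
  have he1 : Real.exp (-L₀) ≤ (s₀*δ)/3 := by
    have h3 : 3/(s₀*δ) ≤ Real.exp L₀ := le_trans (by rw [hCdef]; exact le_max_left _ _) hCexp
    rw [div_le_iff₀ (by positivity)] at h3
    nlinarith [Real.exp_pos (-L₀), Real.exp_pos L₀]
  have he2 : Real.exp (-L₀) ≤ ε/2 := by
    have h3 : 2/ε ≤ Real.exp L₀ := le_trans (by rw [hCdef]; exact le_max_right _ _) hCexp
    rw [div_le_iff₀ (by positivity)] at h3
    nlinarith [Real.exp_pos (-L₀), Real.exp_pos L₀]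
  -- sine bounds
  obtain ⟨hθl, hθr⟩ := hθ
  have hsin : Real.sin (θ₀ / 2) ≤ Real.sin (θ / 2) := by
    apply Real.strictMonoOn_sin.monotoneOn
    · constructor <;> [linarith; linarith]
    · constructor <;> [linarith; linarith]
    · linarith
  set s : ℝ := Real.sin (θ / 2) ^ 2 with hsdef
  have hss₀ : s₀ ≤ s := by
    rw [hs₀def, hsdef]
    exact pow_le_pow_left₀ hsθ₀.le hsin 2
  have hspos : 0 < s := lt_of_lt_of_le hs₀pos hss₀
  have hs1 : s ≤ 1 := by
    rw [hsdef]
    nlinarith [Real.sin_le_one (θ/2), Real.neg_one_le_sin (θ/2)]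
  -- hyperbolic setup
  set T : ℝ := L''/2 + L'''/2 with hTdef
  set D : ℝ := (L'' - L''')/2 with hDdef
  clear_value s T D
  have hprod : 2 * Real.cosh (L'' / 2) * Real.cosh (L''' / 2)
      = Real.cosh T + Real.cosh D := by
    rw [hTdef, hDdef, show (L'' - L''')/2 = L''/2 - L'''/2 by ring,
      Real.cosh_add, Real.cosh_sub]
    ring
  rw [hprod] at heq
  have hTL₀ : L₀ ≤ T := by rw [hTdef]; linarith
  have hcoshD1 : 1 ≤ Real.cosh D := Real.one_le_cosh D
  have hcoshD : Real.cosh D ≤ Real.exp (T - L₀) := by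
    have habs : |D| ≤ T - L₀ := by
      rw [abs_le, hDdef, hTdef]
      constructor <;> linarith
    calc Real.cosh D = Real.cosh |D| := (Real.cosh_abs D).symm
    _ ≤ Real.exp |D| := by
        rw [Real.cosh_eq]
        have := Real.exp_le_exp.mpr (neg_le_self (abs_nonneg D))
        linarith
    _ ≤ Real.exp (T - L₀) := Real.exp_le_exp.mpr habs
  have hexpTL : Real.exp (T - L₀) = Real.exp T * Real.exp (-L₀) := by
    rw [← Real.exp_add]; ring_nf
  have hcoshT_lb : Real.exp T / 2 ≤ Real.cosh T := by
    rw [Real.cosh_eq]; nlinarith [Real.exp_pos (-T)]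
  have hcoshT_ub : 2 * Real.cosh T ≤ Real.exp T * (1 + Real.exp (-L₀)) := by
    rw [Real.cosh_eq]
    have h1' : Real.exp (-T) ≤ Real.exp T * Real.exp (-L₀) := by
      rw [← Real.exp_add]
      apply Real.exp_le_exp.mpr
      linarith
    linarith
  have hexpTpos := Real.exp_pos T
  have hexpmLpos := Real.exp_pos (-L₀)
  -- upper bound on l'/2
  have hub : l'/2 ≤ Real.log s + T + ε/2 := by
    have e1 : Real.exp (l'/2) ≤ 2 * Real.cosh (l'/2) := by
      rw [Real.cosh_eq]; nlinarith [Real.exp_pos (-(l'/2))]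
    have e2 : 2 * Real.cosh (l'/2) ≤ 2 * s * Real.cosh T := by
      rw [heq]; nlinarith
    have e3 : 2 * s * Real.cosh T ≤ s * Real.exp T * (1 + Real.exp (-L₀)) := by
      nlinarith
    have e4 : (1 : ℝ) + Real.exp (-L₀) ≤ Real.exp (ε/2) := by
      have := Real.add_one_le_exp (Real.exp (-L₀))
      have hmono := Real.exp_le_exp.mpr he2
      linarith
    have e3b : s * Real.exp T * (1 + Real.exp (-L₀)) ≤ s * Real.exp T * Real.exp (ε/2) :=
      mul_le_mul_of_nonneg_left e4 (by positivity)
    have e5 : Real.exp (l'/2) ≤ Real.exp (Real.log s + T + ε/2) := by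
      rw [Real.exp_add, Real.exp_add, Real.exp_log hspos]
      linarith
    exact Real.exp_le_exp.mp e5
  -- lower bound on l'/2
  have hlb : Real.log s + T - ε/2 ≤ l'/2 := by
    have f1 : 2 * Real.cosh (l'/2) ≤ Real.exp (l'/2) + 1 := by
      rw [Real.cosh_eq]
      have : Real.exp (-(l'/2)) ≤ 1 := by
        rw [← Real.exp_zero]
        exact Real.exp_le_exp.mpr (by linarith)
      linarith
    have f2 : s * Real.exp T - 3 * Real.exp (T - L₀) ≤ Real.exp (l'/2) := by
      have hone : (1:ℝ) ≤ Real.exp (T - L₀) :=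
        Real.one_le_exp (by linarith)
      have hth : 2 * Real.cosh (l'/2) = 2 * s * Real.cosh T - 2 * (1 - s) * Real.cosh D := by
        rw [heq]; ring
      have p1 : s * (Real.exp T / 2) ≤ s * Real.cosh T :=
        mul_le_mul_of_nonneg_left hcoshT_lb hspos.le
      have p2 : (1 - s) * Real.cosh D ≤ 1 * Real.exp (T - L₀) :=
        mul_le_mul (by linarith) hcoshD (by linarith) (by norm_num)
      nlinarith
    have f3 : s * Real.exp T * (1 - δ) ≤ Real.exp (l'/2) := by
      have hsd : 3 * Real.exp (-L₀) ≤ s * δ := by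
        have := mul_le_mul_of_nonneg_right hss₀ hδpos.le
        linarith
      have hmul : 3 * Real.exp (-L₀) * Real.exp T ≤ s * δ * Real.exp T :=
        mul_le_mul_of_nonneg_right hsd hexpTpos.le
      rw [hexpTL] at f2
      ring_nf at f2 hmul ⊢
      linarith
    have f4 : Real.exp (-(2*δ)) ≤ 1 - δ := by
      have h4a : Real.exp (-(2*δ)) = (Real.exp (2*δ))⁻¹ := Real.exp_neg _
      have h4b : (Real.exp (2*δ))⁻¹ ≤ (1+2*δ)⁻¹ := by
        apply inv_anti₀ (by linarith)
        linarith [Real.add_one_le_exp (2*δ)]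
      have h4c : (1+2*δ)⁻¹ ≤ 1-δ := by
        rw [inv_le_iff_one_le_mul₀ (by linarith : (0:ℝ) < 1+2*δ)]
        nlinarith
      linarith [h4a ▸ le_trans h4b h4c]
    have f5 : Real.exp (Real.log s + T - ε/2) ≤ Real.exp (l'/2) := by
      have g1 : Real.exp (-(ε/2)) ≤ Real.exp (-(2*δ)) :=
        Real.exp_le_exp.mpr (by linarith)
      have g2 : Real.exp (Real.log s + T - ε/2)
          = s * Real.exp T * Real.exp (-(ε/2)) := by
        rw [show Real.log s + T - ε/2 = Real.log s + T + (-(ε/2)) by ring,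
          Real.exp_add, Real.exp_add, Real.exp_log hspos]
      rw [g2]
      have : s * Real.exp T * Real.exp (-(ε/2)) ≤ s * Real.exp T * (1 - δ) :=
        mul_le_mul_of_nonneg_left (g1.trans f4) (by positivity)
      linarith
    exact Real.exp_le_exp.mp f5
  rw [abs_le]
  exact ⟨by linarith, by linarith⟩
end
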